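/- Semi-discrete fundamental theorem: let f: [a,b] → ℝ be continuous and tendable on [a,b], and let a = x₁ < x₂ < ... < x_n = b be a division such that the tendency τ_f is constant on each open subinterval (x_i, x_{i+1}). Extend τ_f to [a,b] by τ_f(a) = f^;_+(a) and τ_f(b) = −f^;_−(b). Then ∫_a^b τ_f(x) dx = −[ Σ_{i=1}^{n−1} f^;_+(x_i)·x_i + Σ_{i=2}^{n} f^;_−(x_i)·x_i ]. -/

import Mathlib

open Filter Topology Set

/-- Right detachment: `lim_{h→0⁺} sgn (f (x+h) - f x) = L`. -/
def HasRightDet (f : ℝ → ℝ) (x L : ℝ) : Prop :=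
  Filter.Tendsto (fun h : ℝ => Real.sign (f (x + h) - f x)) (𝓝[>] (0:ℝ)) (𝓝 L)

/-- Left detachment: `lim_{h→0⁻} sgn (f (x+h) - f x) = L`. -/
def HasLeftDet (f : ℝ → ℝ) (x L : ℝ) : Prop :=
  Filter.Tendsto (fun h : ℝ => Real.sign (f (x + h) - f x)) (𝓝[<] (0:ℝ)) (𝓝 L)

/-- (Two-sided) detachment: `lim_{h→0} sgn (f (x+h) - f x) = L`. -/
def HasDet (f : ℝ → ℝ) (x L : ℝ) : Prop :=
  Filter.Tendsto (fun h : ℝ => Real.sign (f (x + h) - f x)) (𝓝[≠] (0:ℝ)) (𝓝 L)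

/-- Signposted detachment: `lim_{h→0} sgn (h * (f (x+h) - f x)) = L`. -/
def HasSignedDet (f : ℝ → ℝ) (x L : ℝ) : Prop :=
  Filter.Tendsto (fun h : ℝ => Real.sign (h * (f (x + h) - f x))) (𝓝[≠] (0:ℝ)) (𝓝 L)

/-! On each piece `(x i, x (i + 1))` of the division the tendency is a constant `c`. If `c = 1`,
`f` is locally non-decreasing to the right at every interior point, hence monotone on the closed
piece, and strictly so because a plateau would have tendency `0`. If `c = 0`, every interior point
is a local extremum, so the values of `f` on the piece are among the countably many suprema and
infima of `f` over basic open sets; a countable connected set of reals is a point, so `f` is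
constant. The case `c = -1` is the case `c = 1` for `-f`. In all cases `sgn (f t - f s) = c` for
`s < t` in the piece, which forces `f^;_+(x i) = c = -f^;_-(x (i + 1))`. The integral of `τ` over
the piece is then `c (x (i + 1) - x i) = -(f^;_+(x i) x i + f^;_-(x (i + 1)) x (i + 1))`, and
summing over the pieces gives the formula. -/

namespace Real

theorem neg_one_le_sign (r : ℝ) : -1 ≤ sign r := by
  rcases sign_apply_eq r with h | h | h <;> rw [h] <;> norm_num

theorem nonneg_of_neg_one_lt_sign {r : ℝ} (h : -1 < sign r) : 0 ≤ r :=
  not_lt.1 fun hr => (sign_of_neg hr ▸ h).false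

theorem nonpos_of_sign_lt_one {r : ℝ} (h : sign r < 1) : r ≤ 0 :=
  not_lt.1 fun hr => (sign_of_pos hr ▸ h).false

theorem sign_eq_one_iff {r : ℝ} : sign r = 1 ↔ 0 < r := by
  refine ⟨fun h => not_le.1 fun hr => ?_, sign_of_pos⟩
  rcases hr.lt_or_eq with hr | rfl
  · rw [sign_of_neg hr] at h; norm_num at h
  · rw [sign_zero] at h; norm_num at h

theorem sign_sub_comm (r s : ℝ) : sign (r - s) = -sign (s - r) := by
  rw [← sign_neg, neg_sub]

theorem tendsto_sign_nhds_iff {α : Type*} {l : Filter α} {g : α → ℝ} {L : ℝ} :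
    Tendsto (fun a => sign (g a)) l (𝓝 L) ↔ ∀ᶠ a in l, sign (g a) = L := by
  refine ⟨fun h => ?_, fun h => tendsto_const_nhds.congr' (h.mono fun _ ha => ha.symm)⟩
  rcases l.eq_or_neBot with rfl | _
  · exact eventually_bot
  have hL : L ∈ ({-1, 0, 1} : Set ℝ) :=
    (Set.toFinite _).isClosed.mem_of_tendsto h (.of_forall fun a => sign_apply_eq (g a))
  filter_upwards [h (Ioo_mem_nhds (show L - 1 / 2 < L by norm_num)
    (show L < L + 1 / 2 by norm_num))] with a ha
  rcases sign_apply_eq (g a) with h' | h' | h' <;>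
    rcases hL with rfl | rfl | rfl <;> rw [mem_preimage, h'] at ha <;> norm_num at ha <;> exact h'

end Real

theorem hasRightDet_iff {f : ℝ → ℝ} {x L : ℝ} :
    HasRightDet f x L ↔ ∀ᶠ y in 𝓝[>] x, Real.sign (f y - f x) = L := by
  rw [HasRightDet, Real.tendsto_sign_nhds_iff, show 𝓝[>] x = map (x + ·) (𝓝[>] 0) by simp]
  rfl

theorem hasLeftDet_iff {f : ℝ → ℝ} {x L : ℝ} :
    HasLeftDet f x L ↔ ∀ᶠ y in 𝓝[<] x, Real.sign (f y - f x) = L := by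
  rw [HasLeftDet, Real.tendsto_sign_nhds_iff, show 𝓝[<] x = map (x + ·) (𝓝[<] 0) by simp]
  rfl

theorem HasRightDet.eq_of_eventually {f : ℝ → ℝ} {x L c : ℝ} (h : HasRightDet f x L)
    (hc : ∀ᶠ y in 𝓝[>] x, Real.sign (f y - f x) = c) : L = c :=
  let ⟨_, hL, hc⟩ := ((hasRightDet_iff.1 h).and hc).exists
  hL ▸ hc

theorem HasLeftDet.eq_of_eventually {f : ℝ → ℝ} {x L c : ℝ} (h : HasLeftDet f x L)
    (hc : ∀ᶠ y in 𝓝[<] x, Real.sign (f y - f x) = c) : L = c :=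
  let ⟨_, hL, hc⟩ := ((hasLeftDet_iff.1 h).and hc).exists
  hL ▸ hc

theorem HasRightDet.neg {f : ℝ → ℝ} {x L : ℝ} (h : HasRightDet f x L) :
    HasRightDet (-f) x (-L) :=
  hasRightDet_iff.2 <| (hasRightDet_iff.1 h).mono fun y hy => by
    rw [Pi.neg_apply, Pi.neg_apply, neg_sub_neg, Real.sign_sub_comm, hy]

theorem HasLeftDet.neg {f : ℝ → ℝ} {x L : ℝ} (h : HasLeftDet f x L) :
    HasLeftDet (-f) x (-L) :=
  hasLeftDet_iff.2 <| (hasLeftDet_iff.1 h).mono fun y hy => by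
    rw [Pi.neg_apply, Pi.neg_apply, neg_sub_neg, Real.sign_sub_comm, hy]

theorem HasLeftDet.neg_one_le {f : ℝ → ℝ} {x L : ℝ} (h : HasLeftDet f x L) : -1 ≤ L :=
  let ⟨_, hy⟩ := (hasLeftDet_iff.1 h).exists
  hy ▸ Real.neg_one_le_sign _

theorem monotoneOn_Icc_of_eventually_le_nhdsGT {α β : Type*} [ConditionallyCompleteLinearOrder α]
    [TopologicalSpace α] [OrderTopology α] [DenselyOrdered α] [LinearOrder β]
    [TopologicalSpace β] [OrderClosedTopology β] {f : α → β} {p q : α}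
    (hf : ContinuousOn f (Icc p q)) (h : ∀ t ∈ Ioo p q, ∀ᶠ y in 𝓝[>] t, f t ≤ f y) :
    MonotoneOn f (Icc p q) := by
  have from_interior : ∀ s ∈ Ioo p q, ∀ t ∈ Icc s q, f s ≤ f t := by
    intro s hs
    have hsub : Icc s q ⊆ Icc p q := Icc_subset_Icc hs.1.le le_rfl
    refine IsClosed.Icc_subset_of_forall_mem_nhdsWithin (s := f ⁻¹' Ici (f s)) ?_
      (le_refl (f s)) fun t ht => ?_
    · rw [inter_comm]
      exact (hf.mono hsub).preimage_isClosed_of_isClosed isClosed_Icc isClosed_Ici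
    · exact (h t ⟨hs.1.trans_le ht.2.1, ht.2.2⟩).mono fun y hy => le_trans ht.1 hy
  intro s hs t ht hst
  rcases hst.eq_or_lt with rfl | hst
  · rfl
  rcases hs.1.eq_or_lt with rfl | hps
  · refine ContinuousWithinAt.closure_le (closure_Ioo hst.ne ▸ left_mem_Icc.2 hst.le)
      ((hf p hs).mono (Ioo_subset_Icc_self.trans (Icc_subset_Icc le_rfl ht.2)))
      continuousWithinAt_const fun y hy => ?_
    exact from_interior y ⟨hy.1, hy.2.trans_le ht.2⟩ t ⟨hy.2.le, ht.2⟩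
  · exact from_interior s ⟨hps, hst.trans_le ht.2⟩ t ⟨hst.le, ht.2⟩

theorem countable_image_setOf_isLocalExtr {X β : Type*} [TopologicalSpace X]
    [SecondCountableTopology X] [ConditionallyCompleteLinearOrder β] (f : X → β) :
    (f '' {x | IsLocalExtr f x}).Countable := by
  obtain ⟨B, hBc, -, hB⟩ := TopologicalSpace.exists_countable_basis X
  refine (hBc.biUnion fun u _ => (countable_singleton (sInf (f '' u))).insert
    (sSup (f '' u))).mono ?_
  rintro _ ⟨x, hx | hx, rfl⟩
  · obtain ⟨u, huB, hxu, hu⟩ := hB.mem_nhds_iff.1 hx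
    exact mem_biUnion huB <| Or.inr <|
      (IsLeast.csInf_eq ⟨mem_image_of_mem f hxu, forall_mem_image.2 hu⟩).symm
  · obtain ⟨u, huB, hxu, hu⟩ := hB.mem_nhds_iff.1 hx
    exact mem_biUnion huB <| Or.inl <|
      (IsGreatest.csSup_eq ⟨mem_image_of_mem f hxu, forall_mem_image.2 hu⟩).symm

theorem Set.Countable.subsingleton_of_isPreconnected {s : Set ℝ} (hc : s.Countable)
    (hs : IsPreconnected s) : s.Subsingleton := by
  intro a ha b hb
  by_contra hne
  wlog hab : a < b generalizing a b
  · exact this hb ha (Ne.symm hne) ((not_lt.1 hab).lt_of_ne (Ne.symm hne))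
  obtain ⟨y, hy, hys⟩ := (hc.dense_compl ℝ).inter_open_nonempty _ isOpen_Ioo (nonempty_Ioo.2 hab)
  exact hys (hs.Icc_subset ha hb (Ioo_subset_Icc_self hy))

theorem subsingleton_image_Icc_of_isLocalExtr {f : ℝ → ℝ} {p q : ℝ}
    (hf : ContinuousOn f (Icc p q)) (h : ∀ t ∈ Ioo p q, IsLocalExtr f t) :
    (f '' Icc p q).Subsingleton := by
  refine Set.Countable.subsingleton_of_isPreconnected ?_ (isPreconnected_Icc.image f hf)
  refine (((countable_image_setOf_isLocalExtr f).insert (f p)).insert (f q)).mono ?_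
  rintro _ ⟨t, ht, rfl⟩
  rcases ht.1.eq_or_lt with rfl | hpt
  · exact Or.inr (Or.inl rfl)
  rcases ht.2.eq_or_lt with rfl | htq
  · exact Or.inl rfl
  exact Or.inr (Or.inr (mem_image_of_mem f (h t ⟨hpt, htq⟩)))

section Tendency

variable {f dp dm : ℝ → ℝ} {p q : ℝ}

theorem strictMonoOn_of_tendency_eq_one (hf : ContinuousOn f (Icc p q))
    (hdp : ∀ t ∈ Ioo p q, HasRightDet f t (dp t)) (hdm : ∀ t ∈ Ioo p q, HasLeftDet f t (dm t))
    (hτ : ∀ t ∈ Ioo p q, Real.sign (dp t - dm t) = 1) : StrictMonoOn f (Icc p q) := by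
  have hmono : MonotoneOn f (Icc p q) := by
    refine monotoneOn_Icc_of_eventually_le_nhdsGT hf fun t ht => ?_
    have hdp_gt : -1 < dp t := by
      linarith [(hdm t ht).neg_one_le, Real.sign_eq_one_iff.1 (hτ t ht)]
    filter_upwards [hasRightDet_iff.1 (hdp t ht)] with y hy
    exact sub_nonneg.1 (Real.nonneg_of_neg_one_lt_sign (hy ▸ hdp_gt))
  intro s hs t ht hst
  refine (hmono hs ht hst.le).lt_of_ne fun hst_eq => ?_
  have hflat : ∀ y ∈ Icc s t, f y = f s := fun y hy =>
    le_antisymm (hst_eq ▸ hmono ⟨hs.1.trans hy.1, hy.2.trans ht.2⟩ ht hy.2)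
      (hmono hs ⟨hs.1.trans hy.1, hy.2.trans ht.2⟩ hy.1)
  obtain ⟨m, hm⟩ := exists_between hst
  have hm_mem : m ∈ Ioo p q := ⟨hs.1.trans_lt hm.1, hm.2.trans_le ht.2⟩
  have hsign : ∀ y ∈ Icc s t, Real.sign (f y - f m) = 0 := fun y hy => by
    rw [hflat y hy, hflat m ⟨hm.1.le, hm.2.le⟩, sub_self, Real.sign_zero]
  have hdp0 : dp m = 0 := (hdp m hm_mem).eq_of_eventually <|
    mem_of_superset (Ioo_mem_nhdsGT hm.2) fun y hy => hsign y ⟨hm.1.le.trans hy.1.le, hy.2.le⟩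
  have hdm0 : dm m = 0 := (hdm m hm_mem).eq_of_eventually <|
    mem_of_superset (Ioo_mem_nhdsLT hm.1) fun y hy => hsign y ⟨hy.1.le, hy.2.le.trans hm.2.le⟩
  have := hτ m hm_mem
  rw [hdp0, hdm0, sub_self, Real.sign_zero] at this
  exact zero_ne_one this

theorem isLocalExtr_of_hasRightDet_of_hasLeftDet {t L : ℝ} (hdp : HasRightDet f t L)
    (hdm : HasLeftDet f t L) : IsLocalExtr f t := by
  have hne : ∀ᶠ y in 𝓝[≠] t, Real.sign (f y - f t) = L := by
    rw [← nhdsLT_sup_nhdsGT]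
    exact eventually_sup.2 ⟨hasLeftDet_iff.1 hdm, hasRightDet_iff.1 hdp⟩
  rcases le_total 0 L with hL | hL
  · refine Or.inl ?_
    rw [IsMinFilter, ← nhdsNE_sup_pure, eventually_sup, eventually_pure]
    refine ⟨hne.mono fun y hy => ?_, le_rfl⟩
    exact sub_nonneg.1 (Real.nonneg_of_neg_one_lt_sign (by linarith))
  · refine Or.inr ?_
    rw [IsMaxFilter, ← nhdsNE_sup_pure, eventually_sup, eventually_pure]
    refine ⟨hne.mono fun y hy => ?_, le_rfl⟩
    exact sub_nonpos.1 (Real.nonpos_of_sign_lt_one (by linarith))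

theorem sign_sub_eq_of_tendency_eq {c : ℝ} (hf : ContinuousOn f (Icc p q))
    (hdp : ∀ t ∈ Ioo p q, HasRightDet f t (dp t)) (hdm : ∀ t ∈ Ioo p q, HasLeftDet f t (dm t))
    (hτ : ∀ t ∈ Ioo p q, Real.sign (dp t - dm t) = c) ⦃s t : ℝ⦄ (hs : s ∈ Icc p q)
    (ht : t ∈ Icc p q) (hst : s < t) : Real.sign (f t - f s) = c := by
  obtain ⟨m, hm⟩ := exists_between hst
  have hm_mem : m ∈ Ioo p q := ⟨hs.1.trans_lt hm.1, hm.2.trans_le ht.2⟩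
  rcases Real.sign_apply_eq (dp m - dm m) with h | h | h <;> rw [hτ m hm_mem] at h <;> subst h
  · have := strictMonoOn_of_tendency_eq_one hf.neg (fun t ht => (hdp t ht).neg)
      (fun t ht => (hdm t ht).neg)
      (fun t ht => by rw [neg_sub_neg, Real.sign_sub_comm, hτ t ht, neg_neg]) hs ht hst
    exact Real.sign_of_neg (sub_neg.2 (neg_lt_neg_iff.1 this))
  · have hconst := subsingleton_image_Icc_of_isLocalExtr hf fun t ht =>
      isLocalExtr_of_hasRightDet_of_hasLeftDet (hdp t ht)
        (sub_eq_zero.1 (Real.sign_eq_zero_iff.1 (hτ t ht)) ▸ hdm t ht)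
    rw [hconst (mem_image_of_mem f ht) (mem_image_of_mem f hs), sub_self, Real.sign_zero]
  · exact Real.sign_of_pos (sub_pos.2 (strictMonoOn_of_tendency_eq_one hf hdp hdm hτ hs ht hst))

theorem endpoint_dets_of_tendency_eq {c : ℝ} (hpq : p < q) (hf : ContinuousOn f (Icc p q))
    (hdp : ∀ t ∈ Ico p q, HasRightDet f t (dp t)) (hdm : ∀ t ∈ Ioc p q, HasLeftDet f t (dm t))
    (hτ : ∀ t ∈ Ioo p q, Real.sign (dp t - dm t) = c) : dp p = c ∧ dm q = -c := by
  have hsign := sign_sub_eq_of_tendency_eq hf (fun t ht => hdp t (Ioo_subset_Ico_self ht))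
    (fun t ht => hdm t (Ioo_subset_Ioc_self ht)) hτ
  refine ⟨(hdp p (left_mem_Ico.2 hpq)).eq_of_eventually ?_,
    (hdm q (right_mem_Ioc.2 hpq)).eq_of_eventually ?_⟩
  · exact mem_of_superset (Ioo_mem_nhdsGT hpq) fun y hy =>
      hsign (left_mem_Icc.2 hpq.le) (Ioo_subset_Icc_self hy) hy.1
  · exact mem_of_superset (Ioo_mem_nhdsLT hpq) fun y hy => by
      rw [mem_ofPred_eq, Real.sign_sub_comm,
        hsign (Ioo_subset_Icc_self hy) (right_mem_Icc.2 hpq.le) hy.2]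

end Tendency

namespace intervalIntegral

variable {E : Type*} [NormedAddCommGroup E] [NormedSpace ℝ E] [CompleteSpace E]

theorem integral_eq_sum_of_eqOn_Ioo {g : ℝ → E} {x : ℕ → ℝ} {c : ℕ → E} {N : ℕ}
    (hx : ∀ i < N, x i ≤ x (i + 1)) (hg : ∀ i < N, EqOn g (fun _ => c i) (Ioo (x i) (x (i + 1)))) :
    ∫ t in x 0..x N, g t = ∑ i ∈ Finset.range N, (x (i + 1) - x i) • c i := by
  rw [← sum_integral_adjacent_intervals fun i hi =>
    intervalIntegrable_const.congr_uIoo (uIoo_of_le (hx i hi) ▸ (hg i hi).symm)]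
  refine Finset.sum_congr rfl fun i hi => ?_
  rw [integral_congr_Ioo_of_le (hx i (Finset.mem_range.1 hi)) (hg i (Finset.mem_range.1 hi)),
    integral_const]

end intervalIntegral

theorem semiDiscrete_fundamental_theorem_general (f dp dm τ : ℝ → ℝ) (a b : ℝ)
    (n : ℕ) (x : ℕ → ℝ)
    (hx0 : x 0 = a) (hxn : x (n - 1) = b)
    (hmono : ∀ i j : ℕ, i < j → j < n → x i < x j)
    (hcont : ContinuousOn f (Set.Icc a b))
    (hdp : ∀ t ∈ Set.Ico a b, HasRightDet f t (dp t))
    (hdm : ∀ t ∈ Set.Ioc a b, HasLeftDet f t (dm t))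
    (hτ : ∀ t ∈ Set.Ioo a b, τ t = Real.sign (dp t - dm t))
    (hstep : ∀ i : ℕ, i + 1 < n → ∃ c : ℝ, ∀ t ∈ Set.Ioo (x i) (x (i + 1)), τ t = c) :
    (∫ t in a..b, τ t) =
      -((∑ i ∈ Finset.range (n - 1), dp (x i) * x i) +
        ∑ i ∈ Finset.Ico 1 n, dm (x i) * x i) := by
  have hx_mono : MonotoneOn x (Iio n) :=
    StrictMonoOn.monotoneOn fun i _ j hj hij => hmono i j hij hj
  have hx_mem : ∀ i < n, x i ∈ Icc a b := fun i hi =>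
    ⟨hx0 ▸ hx_mono (mem_Iio.2 (by omega)) hi (Nat.zero_le i),
      hxn ▸ hx_mono hi (mem_Iio.2 (by omega)) (by omega)⟩
  have hpiece : ∀ i, i + 1 < n →
      EqOn τ (fun _ => dp (x i)) (Ioo (x i) (x (i + 1))) ∧ dm (x (i + 1)) = -dp (x i) := by
    intro i hi
    obtain ⟨c, hc⟩ := hstep i hi
    have ha := (hx_mem i (by omega)).1
    have hb := (hx_mem (i + 1) hi).2
    obtain ⟨hdp_i, hdm_i⟩ := endpoint_dets_of_tendency_eq (hmono i (i + 1) (lt_add_one i) hi)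
      (hcont.mono (Icc_subset_Icc ha hb)) (fun t ht => hdp t (Ico_subset_Ico ha hb ht))
      (fun t ht => hdm t (Ioc_subset_Ioc ha hb ht))
      (fun t ht => (hτ t (Ioo_subset_Ioo ha hb ht)).symm.trans (hc t ht))
    exact ⟨fun t ht => (hc t ht).trans hdp_i.symm, by rw [hdm_i, hdp_i]⟩
  rw [← hx0, ← hxn, intervalIntegral.integral_eq_sum_of_eqOn_Ioo
      (fun i hi => (hmono i (i + 1) (lt_add_one i) (by omega)).le)
      (fun i hi => (hpiece i (by omega)).1),
    Finset.sum_Ico_eq_sum_range, ← Finset.sum_add_distrib, ← Finset.sum_neg_distrib]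
  refine Finset.sum_congr rfl fun i hi => ?_
  rw [add_comm 1 i, (hpiece i (by have := Finset.mem_range.1 hi; omega)).2, smul_eq_mul]
  ring

/-- Semi-discrete fundamental theorem: for `f` continuous and tendable on `[a,b]`
with one-sided detachments `dp`, `dm`, tendency `τ` (extended to the endpoints by
`τ a = dp a`, `τ b = -dm b`), and a uniformly tended division
`a = x 0 < x 1 < ⋯ < x (n-1) = b` (so `τ` is constant on each open subinterval),
`∫ a^b τ = -( Σ_{i=0}^{n-2} dp(x i)·(x i) + Σ_{i=1}^{n-1} dm(x i)·(x i) )`. -/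
theorem semiDiscrete_fundamental_theorem (f dp dm τ : ℝ → ℝ) (a b : ℝ) (hab : a < b)
    (n : ℕ) (hn : 2 ≤ n) (x : ℕ → ℝ)
    (hx0 : x 0 = a) (hxn : x (n - 1) = b)
    (hmono : ∀ i j : ℕ, i < j → j < n → x i < x j)
    (hcont : ContinuousOn f (Set.Icc a b))
    (hdp : ∀ t ∈ Set.Ico a b, HasRightDet f t (dp t))
    (hdm : ∀ t ∈ Set.Ioc a b, HasLeftDet f t (dm t))
    (hτ : ∀ t ∈ Set.Ioo a b, τ t = Real.sign (dp t - dm t))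
    (hτa : τ a = dp a) (hτb : τ b = -dm b)
    (hstep : ∀ i : ℕ, i + 1 < n → ∃ c : ℝ, ∀ t ∈ Set.Ioo (x i) (x (i + 1)), τ t = c) :
    (∫ t in a..b, τ t) =
      -((∑ i ∈ Finset.range (n - 1), dp (x i) * x i) +
        ∑ i ∈ Finset.Ico 1 n, dm (x i) * x i) :=
  semiDiscrete_fundamental_theorem_general f dp dm τ a b n x hx0 hxn hmono hcont hdp hdm hτ hstep
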